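/- Let Q be a finite faithful quandle and let α be a minimal congruence of Q such that the group Dis_α is abelian. Then there is a prime p such that Dis_α is an elementary abelian p-group (abelian with every nonidentity element of order p), and every α-equivalence class has cardinality a power of p. -/

import Mathlib

/-- A quandle structure on `Q`, given by its left translations: each `L x` is a
permutation of `Q`, `x * x = x`, and `x * (y * z) = (x * y) * (x * z)`
(writing `x * y` for `L x y`). -/
structure QuandleStr (Q : Type*) where
  L : Q → Equiv.Perm Q
  idem : ∀ x : Q, L x x = x
  selfDistrib : ∀ x y z : Q, L x (L y z) = L (L x y) (L x z)

namespace QuandleStr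

variable {Q : Type*} (S : QuandleStr Q)

/-- The left multiplication group `LMlt(Q)`, generated by all left translations. -/
def Lmlt : Subgroup (Equiv.Perm Q) :=
  Subgroup.closure (Set.range S.L)

/-- The displacement group `Dis(Q)`, generated by all `L x * (L y)⁻¹`. -/
def Dis : Subgroup (Equiv.Perm Q) :=
  Subgroup.closure {g : Equiv.Perm Q | ∃ x y : Q, g = S.L x * (S.L y)⁻¹}

/-- A congruence of the quandle: an equivalence relation compatible with `*` and `\`. -/
def IsCong (θ : Setoid Q) : Prop :=
  ∀ x y u v : Q, θ.r x y → θ.r u v →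
    θ.r (S.L x u) (S.L y v) ∧ θ.r ((S.L x)⁻¹ u) ((S.L y)⁻¹ v)

/-- A quandle is faithful if `x ↦ L x` is injective. -/
def Faithful : Prop := Function.Injective S.L

/-- A quandle is connected if `LMlt(Q)` acts transitively. -/
def Connected : Prop := ∀ x y : Q, ∃ g ∈ S.Lmlt, g x = y

/-- A quandle is latin if all right translations are bijective. -/
def Latin : Prop := ∀ y : Q, Function.Bijective fun x : Q => S.L x y

/-- `θ` is a minimal congruence: not equality, and the only congruence strictly
contained in it is equality. -/
def IsMinCong (θ : Setoid Q) : Prop :=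
  S.IsCong θ ∧ θ ≠ ⊥ ∧ ∀ β : Setoid Q, S.IsCong β → β < θ → β = ⊥

/-- `θ` is a maximal congruence: not the all relation, and the only congruence strictly
containing it is the all relation. -/
def IsMaxCong (θ : Setoid Q) : Prop :=
  S.IsCong θ ∧ θ ≠ ⊤ ∧ ∀ β : Setoid Q, S.IsCong β → θ < β → β = ⊤

/-- `Dis_α`: the subgroup generated by the `L x * (L y)⁻¹` with `x α y`. -/
def DisC (r : Q → Q → Prop) : Subgroup (Equiv.Perm Q) :=
  Subgroup.closure {g : Equiv.Perm Q | ∃ x y : Q, r x y ∧ g = S.L x * (S.L y)⁻¹}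

/-- `Dis^α`: the elements of `Dis(Q)` displacing every point inside its `α`-class. -/
def DisUp (θ : Setoid Q) : Subgroup (Equiv.Perm Q) where
  carrier := {g : Equiv.Perm Q | g ∈ S.Dis ∧ ∀ x : Q, θ.r (g x) x}
  one_mem' := ⟨S.Dis.one_mem, fun x => θ.iseqv.refl x⟩
  mul_mem' := by
    rintro a b ⟨ha, ha2⟩ ⟨hb, hb2⟩
    refine ⟨S.Dis.mul_mem ha hb, fun x => ?_⟩
    rw [Equiv.Perm.mul_apply]
    exact θ.iseqv.trans (ha2 (b x)) (hb2 x)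
  inv_mem' := by
    rintro a ⟨ha, ha2⟩
    refine ⟨S.Dis.inv_mem ha, fun x => ?_⟩
    have h := ha2 (a⁻¹ x)
    rw [← Equiv.Perm.mul_apply, mul_inv_cancel, Equiv.Perm.one_apply] at h
    exact θ.iseqv.symm h

end QuandleStr

/-- The orbit equivalence relation of a subgroup of permutations. -/
def orbSetoid {Q : Type*} (N : Subgroup (Equiv.Perm Q)) : Setoid Q where
  r x y := ∃ n ∈ N, n x = y
  iseqv := by
    refine ⟨fun x => ⟨1, N.one_mem, rfl⟩, ?_, ?_⟩
    · rintro x y ⟨n, hn, rfl⟩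
      exact ⟨n⁻¹, N.inv_mem hn, by rw [← Equiv.Perm.mul_apply, inv_mul_cancel, Equiv.Perm.one_apply]⟩
    · rintro x y z ⟨n, hn, rfl⟩ ⟨m, hm, rfl⟩
      exact ⟨m * n, N.mul_mem hm hn, Equiv.Perm.mul_apply m n x⟩

/-!
`Dis_α` moves points only inside `α`-classes, and the orbits of a subgroup of it normalized by
the translations form a congruence; by minimality they are the `α`-classes once the subgroup is
nontrivial. Faithfulness makes `Dis_α` nontrivial, so for some prime `p` its `p`-torsion
subgroup `T` is nontrivial, and `T` is normalized because `Dis_α` is. Since `Dis_α` is abelian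
and `T` is transitive on each class, `Dis_α` inherits exponent `p` from `T`; the classes, being
orbits of the `p`-group `T`, have `p`-power size.
-/

namespace Subgroup

variable {G : Type*} [Group G]

def torsionBy (D : Subgroup G) (hD : ∀ a ∈ D, ∀ b ∈ D, a * b = b * a) (n : ℕ) : Subgroup G where
  carrier := {g | g ∈ D ∧ g ^ n = 1}
  one_mem' := ⟨D.one_mem, one_pow n⟩
  mul_mem' := by
    rintro a b ⟨ha, han⟩ ⟨hb, hbn⟩
    exact ⟨D.mul_mem ha hb, by rw [Commute.mul_pow (hD a ha b hb), han, hbn, one_mul]⟩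
  inv_mem' := by
    rintro a ⟨ha, han⟩
    exact ⟨D.inv_mem ha, by rw [inv_pow, han, inv_one]⟩

variable {D : Subgroup G} {hD : ∀ a ∈ D, ∀ b ∈ D, a * b = b * a} {n : ℕ}

lemma torsionBy_le : D.torsionBy hD n ≤ D := fun _ hg => hg.1

lemma conj_mem_torsionBy {σ : G} (hσ : ∀ g ∈ D, σ * g * σ⁻¹ ∈ D) {g : G}
    (hg : g ∈ D.torsionBy hD n) : σ * g * σ⁻¹ ∈ D.torsionBy hD n :=
  ⟨hσ g hg.1, by rw [conj_pow, hg.2, mul_one, mul_inv_cancel]⟩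

lemma isPGroup_torsionBy (p : ℕ) : IsPGroup p (D.torsionBy hD p) :=
  fun g => ⟨1, Subtype.ext (by simpa using g.2.2)⟩

lemma exists_prime_torsionBy_ne_bot [Finite G] (hD) (hne : D ≠ ⊥) :
    ∃ p : ℕ, p.Prime ∧ D.torsionBy hD p ≠ ⊥ := by
  obtain ⟨g, hgD, hg1⟩ : ∃ g ∈ D, g ≠ 1 := by
    by_contra! h
    exact hne ((Subgroup.eq_bot_iff_forall D).mpr h)
  have hord : orderOf g ≠ 0 := (orderOf_pos g).ne'
  obtain ⟨p, hp, hpg⟩ := Nat.exists_prime_and_dvd (mt orderOf_eq_one_iff.mp hg1)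
  set t := g ^ (orderOf g / p)
  have ht : orderOf t = p := orderOf_pow_orderOf_div hord hpg
  refine ⟨p, hp, (Subgroup.ne_bot_iff_exists_ne_one).mpr
    ⟨⟨t, D.pow_mem hgD _, ht ▸ pow_orderOf_eq_one t⟩, fun h => hp.one_lt.ne' ?_⟩⟩
  rw [← ht, show t = 1 from congrArg Subtype.val h, orderOf_one]

end Subgroup

section orbSetoid

variable {X : Type*} {M : Subgroup (Equiv.Perm X)}

lemma orbSetoid_ne_bot (hM : M ≠ ⊥) : orbSetoid M ≠ ⊥ := by
  intro h
  refine hM ((Subgroup.eq_bot_iff_forall M).mpr fun t ht => Equiv.ext fun u => ?_)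
  have : (orbSetoid M).r u (t u) := ⟨t, ht, rfl⟩
  rw [h, Setoid.bot_def] at this
  exact this.symm

lemma card_orbSetoid_class [Finite X] {p : ℕ} [Fact p.Prime] (hM : IsPGroup p M) (x : X) :
    ∃ m : ℕ, Nat.card {y : X // (orbSetoid M).r x y} = p ^ m := by
  obtain ⟨m, hm⟩ := hM.card_orbit x
  refine ⟨m, Eq.trans (Nat.card_congr (Equiv.subtypeEquivRight fun y => ?_)) hm⟩
  exact ⟨fun ⟨t, ht, hty⟩ => ⟨⟨t, ht⟩, hty⟩, fun ⟨t, hty⟩ => ⟨t, t.2, hty⟩⟩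

/-- `g` agrees at `u` with some `t ∈ M`, and `t⁻¹ * g` fixes `u`, hence so does
`(t⁻¹ * g) ^ n = g ^ n`. -/
lemma pow_eq_one_of_le_of_orbSetoid {D : Subgroup (Equiv.Perm X)}
    (hD : ∀ a ∈ D, ∀ b ∈ D, a * b = b * a) (hMD : M ≤ D) {n : ℕ} (hM : ∀ t ∈ M, t ^ n = 1)
    (horb : ∀ g ∈ D, ∀ u, (orbSetoid M).r u (g u)) {g : Equiv.Perm X} (hg : g ∈ D) :
    g ^ n = 1 := by
  refine Equiv.ext fun u => ?_
  obtain ⟨t, htM, htu⟩ := horb g hg u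
  have hfix : (t⁻¹ * g) u = u := by
    rw [Equiv.Perm.mul_apply, ← htu, Equiv.Perm.inv_eq_iff_eq]
  have hcomm : Commute t (t⁻¹ * g) := hD t (hMD htM) _ (D.mul_mem (D.inv_mem (hMD htM)) hg)
  rw [show g = t * (t⁻¹ * g) by group, hcomm.mul_pow, hM t htM, one_mul, Equiv.Perm.one_apply]
  exact (Equiv.Perm.pow_apply_eq_self_of_apply_eq_self hfix n)

end orbSetoid

namespace QuandleStr

variable {Q : Type*} (S : QuandleStr Q)

/-- The automorphisms: `σ (x * y) = σ x * σ y` for all `y` says `σ * L x * σ⁻¹ = L (σ x)`. -/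
def Aut : Subgroup (Equiv.Perm Q) where
  carrier := {σ | ∀ x, σ * S.L x * σ⁻¹ = S.L (σ x)}
  one_mem' := by simp
  mul_mem' := by
    intro a b ha hb x
    rw [Equiv.Perm.mul_apply, ← ha, ← hb]
    group
  inv_mem' := by
    intro a ha x
    have h := ha (a⁻¹ x)
    rw [Equiv.Perm.coe_inv, Equiv.apply_symm_apply] at h
    rw [Equiv.Perm.coe_inv, ← h]
    group

lemma L_mem_aut (x : Q) : S.L x ∈ S.Aut := fun y => Equiv.ext fun z => by
  simpa only [Equiv.Perm.mul_apply, Equiv.Perm.coe_inv, Equiv.apply_symm_apply]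
    using S.selfDistrib x y ((S.L x)⁻¹ z)

lemma lmlt_le_aut : S.Lmlt ≤ S.Aut :=
  (Subgroup.closure_le _).mpr (Set.range_subset_iff.mpr S.L_mem_aut)

lemma disC_le_lmlt (r : Q → Q → Prop) : S.DisC r ≤ S.Lmlt :=
  (Subgroup.closure_le _).mpr fun _ ⟨x, y, _, hg⟩ =>
    hg ▸ mul_mem (Subgroup.subset_closure ⟨x, rfl⟩) (inv_mem (Subgroup.subset_closure ⟨y, rfl⟩))

variable {S} {α : Setoid Q}

lemma disC_le_disUp (hα : S.IsCong α) : S.DisC α.r ≤ S.DisUp α := by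
  refine (Subgroup.closure_le _).mpr fun _ ⟨x, y, hxy, hg⟩ =>
    hg ▸ ⟨Subgroup.subset_closure ⟨x, y, rfl⟩, fun u => ?_⟩
  simpa only [Equiv.Perm.mul_apply, Equiv.Perm.coe_inv, Equiv.apply_symm_apply]
    using (hα x y ((S.L y)⁻¹ u) ((S.L y)⁻¹ u) hxy (α.refl _)).1

lemma conj_mem_disC {σ : Equiv.Perm Q} (hσ : σ ∈ S.Aut)
    (hσα : ∀ x y, α.r x y → α.r (σ x) (σ y)) {g : Equiv.Perm Q} (hg : g ∈ S.DisC α.r) :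
    σ * g * σ⁻¹ ∈ S.DisC α.r := by
  suffices S.DisC α.r ≤ (S.DisC α.r).comap (MulAut.conj σ).toMonoidHom from this hg
  refine (Subgroup.closure_le _).mpr ?_
  rintro _ ⟨x, y, hxy, rfl⟩
  change σ * (S.L x * (S.L y)⁻¹) * σ⁻¹ ∈ S.DisC α.r
  have : σ * (S.L x * (S.L y)⁻¹) * σ⁻¹ = S.L (σ x) * (S.L (σ y))⁻¹ := by
    rw [← hσ x, ← hσ y]
    group
  exact this ▸ Subgroup.subset_closure ⟨σ x, σ y, hσα x y hxy, rfl⟩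

lemma L_conj_mem_disC (hα : S.IsCong α) (x : Q) {g : Equiv.Perm Q} (hg : g ∈ S.DisC α.r) :
    S.L x * g * (S.L x)⁻¹ ∈ S.DisC α.r :=
  conj_mem_disC (S.L_mem_aut x) (fun _ _ h => (hα x x _ _ (α.refl x) h).1) hg

lemma L_inv_conj_mem_disC (hα : S.IsCong α) (x : Q) {g : Equiv.Perm Q} (hg : g ∈ S.DisC α.r) :
    (S.L x)⁻¹ * g * (S.L x)⁻¹⁻¹ ∈ S.DisC α.r :=
  conj_mem_disC (inv_mem (S.L_mem_aut x)) (fun _ _ h => (hα x x _ _ (α.refl x) h).2) hg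

lemma disC_ne_bot (hfaith : S.Faithful) (hne : α ≠ ⊥) : S.DisC α.r ≠ ⊥ := by
  obtain ⟨x, y, hxy, hne⟩ : ∃ x y, α.r x y ∧ x ≠ y := by
    by_contra! h
    exact hne (le_bot_iff.mp fun x y hxy => h x y hxy)
  refine (Subgroup.ne_bot_iff_exists_ne_one).mpr
    ⟨⟨_, Subgroup.subset_closure ⟨x, y, hxy, rfl⟩⟩, fun h => hne (hfaith ?_)⟩
  exact mul_inv_eq_one.mp (congrArg Subtype.val h)

lemma isCong_orbSetoid {M : Subgroup (Equiv.Perm Q)} (hM : M ≤ S.Aut)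
    (hL : ∀ x, ∀ g ∈ M, S.L x * g * (S.L x)⁻¹ ∈ M)
    (hL' : ∀ x, ∀ g ∈ M, (S.L x)⁻¹ * g * S.L x ∈ M) : S.IsCong (orbSetoid M) := by
  rintro x y u v ⟨n, hn, rfl⟩ ⟨m, hm, rfl⟩
  have hnm : n⁻¹ * m ∈ M := M.mul_mem (M.inv_mem hn) hm
  rw [← hM hn x]
  constructor
  · refine ⟨n * (S.L x * (n⁻¹ * m) * (S.L x)⁻¹), M.mul_mem hn (hL x _ hnm), ?_⟩
    simp [Equiv.Perm.mul_apply]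
  · refine ⟨n * ((S.L x)⁻¹ * (n⁻¹ * m) * S.L x), M.mul_mem hn (hL' x _ hnm), ?_⟩
    simp [Equiv.Perm.mul_apply]

lemma orbSetoid_torsionBy_eq (hmin : S.IsMinCong α)
    {hD : ∀ a ∈ S.DisC α.r, ∀ b ∈ S.DisC α.r, a * b = b * a} {p : ℕ}
    (hT : (S.DisC α.r).torsionBy hD p ≠ ⊥) : orbSetoid ((S.DisC α.r).torsionBy hD p) = α := by
  obtain ⟨hα, -, hmin⟩ := hmin
  have hle : orbSetoid ((S.DisC α.r).torsionBy hD p) ≤ α := by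
    rintro x _ ⟨g, hg, rfl⟩
    exact α.symm ((disC_le_disUp hα (Subgroup.torsionBy_le hg)).2 x)
  have hcong : S.IsCong (orbSetoid ((S.DisC α.r).torsionBy hD p)) := by
    refine isCong_orbSetoid (Subgroup.torsionBy_le.trans ((S.disC_le_lmlt _).trans S.lmlt_le_aut))
      (fun x _ => Subgroup.conj_mem_torsionBy fun _ => L_conj_mem_disC hα x)
      (fun x g hg => ?_)
    simpa only [inv_inv]
      using Subgroup.conj_mem_torsionBy (fun _ => L_inv_conj_mem_disC hα x) hg
  exact hle.lt_or_eq.resolve_left fun hlt => orbSetoid_ne_bot hT (hmin _ hcong hlt)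

end QuandleStr

theorem stmt8 {Q : Type*} [Finite Q] (S : QuandleStr Q) (hfaith : S.Faithful)
    (α : Setoid Q) (hmin : S.IsMinCong α)
    (habel : ∀ a b : ↥(S.DisC α.r), a * b = b * a) :
    ∃ p : ℕ, p.Prime ∧
      (∀ g ∈ S.DisC α.r, ∀ h ∈ S.DisC α.r, g * h = h * g) ∧
      (∀ g ∈ S.DisC α.r, g ≠ 1 → orderOf g = p) ∧
      (∀ x : Q, ∃ m : ℕ, Nat.card {y : Q // α.r x y} = p ^ m) := by
  have hD : ∀ g ∈ S.DisC α.r, ∀ h ∈ S.DisC α.r, g * h = h * g :=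
    fun g hg h hh => congrArg Subtype.val (habel ⟨g, hg⟩ ⟨h, hh⟩)
  obtain ⟨p, hp, hT⟩ :=
    Subgroup.exists_prime_torsionBy_ne_bot hD (QuandleStr.disC_ne_bot hfaith hmin.2.1)
  have := Fact.mk hp
  have horb := QuandleStr.orbSetoid_torsionBy_eq hmin hT
  have hexp : ∀ g ∈ S.DisC α.r, g ^ p = 1 := fun g hg =>
    pow_eq_one_of_le_of_orbSetoid hD Subgroup.torsionBy_le (fun t ht => ht.2)
      (fun g hg u => horb ▸ α.symm ((QuandleStr.disC_le_disUp hmin.1 hg).2 u)) hg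
  refine ⟨p, hp, hD, fun g hg hg1 => orderOf_eq_prime (hexp g hg) hg1, fun x => ?_⟩
  rw [← horb]
  exact card_orbSetoid_class (Subgroup.isPGroup_torsionBy p) x
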